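/- In four variables t₁, t₂, t₃, t₄, the generating function of the Schur polynomials indexed by two-row rectangles satisfies Σ_{n≥0} S_{(n,n)}(t₁,t₂,t₃,t₄) = (1 − t₁t₂t₃t₄) / ((1−t₁t₂)(1−t₁t₃)(1−t₁t₄)(1−t₂t₃)(1−t₂t₄)(1−t₃t₄)); equivalently, (Σ_{n≥0} S_{(n,n)}(t₁,t₂,t₃,t₄)) · ∏_{1≤i<j≤4}(1−t_it_j) = 1 − t₁t₂t₃t₄ as formal power series. -/

import Mathlib

/-!
Laplace expansion along the first two rows writes the alternant `a_n` of `(n, n)` as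
`Σ_{a<b} c_{ab} (t_a t_b)^{n+2}`, where `c_{ab}` is `t_a - t_b` times the signed complementary
minor. Summing over `n` turns each power into a geometric series, so
`(Σ_n a_n) · ∏_{i<j}(1 - t_i t_j) = Σ_{a<b} c_{ab} (t_a t_b)² ∏_{(i,j) ≠ (a,b)}(1 - t_i t_j)`,
a polynomial identity whose right side equals `(1 - t₁t₂t₃t₄) · Δ`; dividing by the Vandermonde
product `Δ` gives the theorem. The sum over `n` converges coefficientwise: `S_{(n,n)}` has
order `≥ 2n`, since the alternant has order `≥ 2n + 6` while `Δ` has order `≤ 6`.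
-/

open MvPowerSeries

noncomputable section

/-- The Vandermonde product `∏_{i<j} (t_i - t_j)`. -/
def vanDet (d : ℕ) : MvPowerSeries (Fin d) ℚ :=
  ∏ p ∈ Finset.univ.filter fun p : Fin d × Fin d => p.1 < p.2,
    (MvPowerSeries.X p.1 - MvPowerSeries.X p.2)

/-- The alternant `det (t_j^{λ_i + d - i})` (with rows indexed by `i` zero-indexed, so the
exponent in row `i` is `λ_i + (d - 1 - i)`). -/
def alternant (d : ℕ) (lam : Fin d → ℕ) : MvPowerSeries (Fin d) ℚ :=
  Matrix.det (Matrix.of fun i j : Fin d =>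
    (MvPowerSeries.X j : MvPowerSeries (Fin d) ℚ) ^ (lam i + (d - 1 - (i : ℕ))))

/-- `S` is the Schur polynomial attached to the partition `λ = (λ₁ ≥ ⋯ ≥ λ_d ≥ 0)`,
characterized by `S · ∏_{i<j}(t_i - t_j) = det(t_j^{λ_i + d - i})`; this determines `S`
uniquely since multivariate power series over `ℚ` form a domain. -/
def IsSchur (d : ℕ) (lam : Fin d → ℕ) (S : MvPowerSeries (Fin d) ℚ) : Prop :=
  S * vanDet d = alternant d lam

/-- `m` is the family of coefficients of the expansion `f = Σ_λ m_λ S_λ` of the symmetric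
power series `f` in the Schur family `S`, the sum running over partitions `λ` in at most `d`
parts, i.e. antitone functions `Fin d → ℕ` (coefficientwise, only finitely many partitions
contribute to each coefficient since `S_λ` is homogeneous of degree `|λ|`). -/
def IsSchurExpansion (d : ℕ) (f : MvPowerSeries (Fin d) ℚ)
    (S : (Fin d → ℕ) → MvPowerSeries (Fin d) ℚ) (m : (Fin d → ℕ) → ℚ) : Prop :=
  ∀ e : Fin d →₀ ℕ,
    MvPowerSeries.coeff e f =
      ∑ᶠ (lam : Fin d → ℕ) (_ : Antitone lam), m lam * MvPowerSeries.coeff e (S lam)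

/-- The multiplicity series `M' = Σ_λ m_λ v₁^{λ₁-λ₂} v₂^{λ₂-λ₃} ⋯ v_{d-1}^{λ_{d-1}-λ_d} v_d^{λ_d}`
in the variables `v₁,…,v_d` (where `v_i = t₁⋯t_i`): the coefficient at the exponent `e` is
`m λ` for the unique partition `λ` with `λ_i - λ_{i+1} = e_i`, i.e. `λ_i = Σ_{j ≥ i} e_j`. -/
def multSeries (d : ℕ) (m : (Fin d → ℕ) → ℚ) : MvPowerSeries (Fin d) ℚ :=
  fun e => m fun i => ∑ j ∈ Finset.univ.filter fun j => i ≤ j, e j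

end

open Finset

namespace MvPowerSeries

variable {σ R : Type*}

section CommSemiring

variable [CommSemiring R]

theorem le_order_sum {ι : Type*} (s : Finset ι) (F : ι → MvPowerSeries σ R) {n : ℕ∞}
    (h : ∀ i ∈ s, n ≤ (F i).order) : n ≤ (∑ i ∈ s, F i).order :=
  le_order fun d hd => by
    rw [map_sum]
    exact sum_eq_zero fun i hi => coeff_of_lt_order (hd.trans_le (h i hi))

theorem le_order_sum_mul_pow_mul {ι : Type*} (s : Finset ι) (c u Q : ι → MvPowerSeries σ R)
    (hu : ∀ i ∈ s, constantCoeff (u i) = 0) (m : ℕ) :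
    (m : ℕ∞) ≤ (∑ i ∈ s, c i * u i ^ m * Q i).order :=
  le_order_sum s _ fun i hi =>
    calc (m : ℕ∞) ≤ (u i ^ m).order := le_order_pow_of_constantCoeff_eq_zero m (hu i hi)
      _ ≤ (c i).order + (u i ^ m).order + (Q i).order := le_add_self.trans le_self_add
      _ ≤ (c i * u i ^ m * Q i).order := (add_le_add_left le_order_mul _).trans le_order_mul

theorem coeff_mul_eq_coeff_sum_range_mul {S : ℕ → MvPowerSeries σ R}
    (hS : ∀ n : ℕ, (n : ℕ∞) ≤ (S n).order) {f : MvPowerSeries σ R}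
    (hf : ∀ e, coeff e f = ∑ᶠ n, coeff e (S n)) (W : MvPowerSeries σ R) {e : σ →₀ ℕ} {N : ℕ}
    (hN : e.degree < N) : coeff e (f * W) = coeff e ((∑ n ∈ range N, S n) * W) := by
  classical
  rw [coeff_mul, coeff_mul]
  refine sum_congr rfl fun p hp => ?_
  have hdeg : p.1.degree < N := by
    rw [← mem_antidiagonal.1 hp, map_add] at hN
    omega
  rw [hf, map_sum]
  congr 1
  refine finsum_eq_sum_of_support_subset _ fun n hn => ?_
  by_contra hnN
  refine hn (coeff_of_lt_order (lt_of_lt_of_le ?_ (hS n)))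
  exact_mod_cast hdeg.trans_le (not_lt.1 (by simpa using hnN))

end CommSemiring

theorem le_order_of_le_order_mul [CommSemiring R] [NoZeroDivisors R] {f g : MvPowerSeries σ R}
    {p q : ℕ} (hfg : ((p + q : ℕ) : ℕ∞) ≤ (f * g).order) (hg : g.order ≤ q) :
    (p : ℕ∞) ≤ f.order := by
  have hq : ((p + q : ℕ) : ℕ∞) ≤ f.order + q :=
    hfg.trans ((order_mul f g).trans_le (add_le_add_right hg _))
  rwa [Nat.cast_add, ENat.add_le_add_iff_right (ENat.natCast_ne_top q)] at hq

theorem order_X_sub_X_le_one [CommRing R] [Nontrivial R] {a b : σ} (hab : a ≠ b) :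
    (X a - X b : MvPowerSeries σ R).order ≤ 1 := by
  classical
  refine (order_le (d := Finsupp.single a 1) ?_).trans (by simp)
  simp [coeff_X, Finsupp.single_left_inj one_ne_zero, hab]

end MvPowerSeries

theorem sum_range_sum_mul_pow_mul_prod_one_sub {ι R : Type*} [CommRing R] [DecidableEq ι]
    (s : Finset ι) (c u : ι → R) (k N : ℕ) :
    (∑ n ∈ range N, ∑ i ∈ s, c i * u i ^ (n + k)) * ∏ j ∈ s, (1 - u j) =
      ∑ i ∈ s, c i * u i ^ k * ∏ j ∈ s.erase i, (1 - u j) -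
        ∑ i ∈ s, c i * u i ^ (N + k) * ∏ j ∈ s.erase i, (1 - u j) := by
  rw [sum_comm, sum_mul, ← sum_sub_distrib]
  refine sum_congr rfl fun i hi => ?_
  have hgeom : ∑ n ∈ range N, c i * u i ^ (n + k) = c i * u i ^ k * ∑ n ∈ range N, u i ^ n := by
    simp only [mul_sum, pow_add]
    exact sum_congr rfl fun n _ => by ring
  rw [← mul_prod_erase s _ hi, hgeom]
  linear_combination c i * u i ^ k * (∏ j ∈ s.erase i, (1 - u j)) * geom_sum_mul_neg (u i) N

def ltPairs (d : ℕ) : Finset (Fin d × Fin d) := univ.filter fun p => p.1 < p.2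

theorem card_ltPairs (d : ℕ) : #(ltPairs d) = ∑ i : Fin d, (d - 1 - i) := by
  rw [ltPairs, card_filter, Fintype.sum_prod_type]
  refine sum_congr rfl fun i _ => ?_
  rw [← card_filter, ← Fin.card_Ioi]
  congr 1
  ext j
  simp

theorem order_vanDet_le (d : ℕ) : (vanDet d).order ≤ #(ltPairs d) := by
  rw [vanDet, order_prod]
  calc ∑ p ∈ ltPairs d, (X p.1 - X p.2 : MvPowerSeries (Fin d) ℚ).order
      ≤ ∑ _p ∈ ltPairs d, 1 := sum_le_sum fun p hp => order_X_sub_X_le_one (mem_filter.1 hp).2.ne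
    _ = #(ltPairs d) := by simp

theorem le_order_alternant (d : ℕ) (lam : Fin d → ℕ) :
    ((∑ i, (lam i + (d - 1 - i)) : ℕ) : ℕ∞) ≤ (alternant d lam).order := by
  rw [alternant, Matrix.det_apply]
  refine le_order_sum _ _ fun τ _ => ?_
  rw [Units.smul_def, zsmul_eq_mul]
  refine (le_add_self.trans le_order_mul).trans' ?_
  calc (((∑ i, (lam i + (d - 1 - i))) : ℕ) : ℕ∞)
      = ∑ i, ((lam (τ i) + (d - 1 - τ i) : ℕ) : ℕ∞) := by
        rw [← Nat.cast_sum, Equiv.sum_comp τ (fun i => lam i + (d - 1 - i))]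
    _ ≤ ∑ i, (X i ^ (lam (τ i) + (d - 1 - τ i)) : MvPowerSeries (Fin d) ℚ).order :=
        sum_le_sum fun i _ => le_order_pow_of_constantCoeff_eq_zero _ (constantCoeff_X i)
    _ ≤ _ := le_order_prod _ _

theorem le_order_of_isSchur {d : ℕ} {lam : Fin d → ℕ} {S : MvPowerSeries (Fin d) ℚ}
    (h : IsSchur d lam S) : ((∑ i, lam i : ℕ) : ℕ∞) ≤ S.order := by
  refine le_order_of_le_order_mul ?_ ((order_vanDet_le d).trans_eq (congrArg _ (card_ltPairs d)))
  rw [show S * vanDet d = alternant d lam from h, ← sum_add_distrib]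
  exact le_order_alternant d lam

theorem ltPairs_four : ltPairs 4 = {(0, 1), (0, 2), (0, 3), (1, 2), (1, 3), (2, 3)} := by decide

/-- The coefficient of `(t_a t_b)^{n+2}` in the Laplace expansion of `alternant 4 (n, n, 0, 0)`
along rows `0, 1`: the minor of those rows on columns `a < b` is `(t_a t_b)^{n+2} (t_a - t_b)`,
and the complementary minor on rows `2, 3` (exponents `1, 0`) is `t_c - t_d`, with Laplace sign
`(-1)^(a + b + 1)`. -/
noncomputable def rectCofactor : Fin 4 × Fin 4 → MvPowerSeries (Fin 4) ℚ
  | (0, 1) => (X 0 - X 1) * (X 2 - X 3)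
  | (0, 2) => -((X 0 - X 2) * (X 1 - X 3))
  | (0, 3) => (X 0 - X 3) * (X 1 - X 2)
  | (1, 2) => (X 1 - X 2) * (X 0 - X 3)
  | (1, 3) => -((X 1 - X 3) * (X 0 - X 2))
  | (2, 3) => (X 2 - X 3) * (X 0 - X 1)
  | _ => 0

theorem alternant_two_row_rectangle (n : ℕ) :
    alternant 4 (fun i => if (i : ℕ) < 2 then n else 0) =
      ∑ p ∈ ltPairs 4, rectCofactor p * (X p.1 * X p.2) ^ (n + 2) := by
  simp only [ltPairs_four, alternant, Matrix.det_succ_row_zero, Fin.sum_univ_succ,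
    Matrix.of_apply, Matrix.submatrix_apply, Fin.succAbove, Matrix.det_unique]
  simp [Fin.lt_def, Fin.ext_iff, rectCofactor]
  ring

theorem sum_rectCofactor_mul_prod_erase :
    ∑ p ∈ ltPairs 4, rectCofactor p * (X p.1 * X p.2) ^ 2 *
        ∏ q ∈ (ltPairs 4).erase p, (1 - X q.1 * X q.2) =
      (1 - X 0 * X 1 * X 2 * X 3) * vanDet 4 := by
  rw [vanDet, show univ.filter _ = ltPairs 4 from rfl, ltPairs_four]
  simp [erase_insert_of_ne, rectCofactor]
  ring

theorem coeff_sum_range_alternant_mul_prod {e : Fin 4 →₀ ℕ} {N : ℕ} (hN : e.degree < N) :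
    coeff e ((∑ n ∈ range N, alternant 4 (fun i => if (i : ℕ) < 2 then n else 0)) *
        ∏ p ∈ ltPairs 4, (1 - X p.1 * X p.2)) =
      coeff e ((1 - X 0 * X 1 * X 2 * X 3) * vanDet 4) := by
  have hrem : coeff e (∑ p ∈ ltPairs 4, rectCofactor p * (X p.1 * X p.2) ^ (N + 2) *
      ∏ q ∈ (ltPairs 4).erase p, (1 - X q.1 * X q.2)) = 0 :=
    coeff_of_lt_order <| (le_order_sum_mul_pow_mul _ _ _ _ (fun p _ => by simp) _).trans_lt' <|
      by exact_mod_cast hN.trans_le (N.le_add_right 2)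
  simp_rw [alternant_two_row_rectangle]
  rw [sum_range_sum_mul_pow_mul_prod_one_sub, map_sub, hrem, sub_zero,
    sum_rectCofactor_mul_prod_erase]

/-- In four variables,
`Σ_{n≥0} S_{(n,n)} = (1 - t₁t₂t₃t₄) / ∏_{1≤i<j≤4}(1 - t_i t_j)`; equivalently,
`(Σ_{n≥0} S_{(n,n)}) · ∏_{1≤i<j≤4}(1 - t_i t_j) = 1 - t₁t₂t₃t₄`. -/
theorem stmt10
    (SR : ℕ → MvPowerSeries (Fin 4) ℚ)
    (hSR : ∀ n : ℕ, IsSchur 4 (fun i => if (i : ℕ) < 2 then n else 0) (SR n))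
    (f : MvPowerSeries (Fin 4) ℚ)
    (hf : ∀ e : Fin 4 →₀ ℕ,
      MvPowerSeries.coeff e f = ∑ᶠ n : ℕ, MvPowerSeries.coeff e (SR n)) :
    f = (1 - MvPowerSeries.X 0 * MvPowerSeries.X 1 * MvPowerSeries.X 2 * MvPowerSeries.X 3) *
        (∏ p ∈ Finset.univ.filter fun p : Fin 4 × Fin 4 => p.1 < p.2,
          (1 - MvPowerSeries.X p.1 * MvPowerSeries.X p.2 : MvPowerSeries (Fin 4) ℚ))⁻¹ ∧
    f * ∏ p ∈ Finset.univ.filter fun p : Fin 4 × Fin 4 => p.1 < p.2,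
          (1 - MvPowerSeries.X p.1 * MvPowerSeries.X p.2 : MvPowerSeries (Fin 4) ℚ) =
      1 - MvPowerSeries.X 0 * MvPowerSeries.X 1 * MvPowerSeries.X 2 * MvPowerSeries.X 3 := by
  set P : MvPowerSeries (Fin 4) ℚ := ∏ p ∈ ltPairs 4, (1 - X p.1 * X p.2)
  have hS : ∀ n : ℕ, (n : ℕ∞) ≤ (SR n).order := fun n =>
    (le_order_of_isSchur (hSR n)).trans' (by simp [Fin.sum_univ_four])
  have hV : vanDet 4 ≠ 0 := fun h => by simpa [h, ltPairs_four] using order_vanDet_le 4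
  have key : f * P = 1 - X 0 * X 1 * X 2 * X 3 := by
    refine mul_right_cancel₀ hV (ext fun e => ?_)
    have hN : e.degree < e.degree + 1 := Nat.lt_succ_self _
    calc coeff e (f * P * vanDet 4) = coeff e (f * (vanDet 4 * P)) := by
          rw [mul_right_comm, mul_assoc]
      _ = coeff e ((∑ n ∈ range (e.degree + 1), SR n) * (vanDet 4 * P)) :=
          coeff_mul_eq_coeff_sum_range_mul hS hf _ hN
      _ = coeff e ((∑ n ∈ range (e.degree + 1),
            alternant 4 (fun i => if (i : ℕ) < 2 then n else 0)) * P) := by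
          simp_rw [← mul_assoc, sum_mul, show ∀ n, SR n * vanDet 4 = _ from hSR]
      _ = _ := coeff_sum_range_alternant_mul_prod hN
  have hP : constantCoeff P ≠ 0 := by simp [P]
  refine ⟨?_, key⟩
  change f = _ * P⁻¹
  rw [← key, mul_assoc, MvPowerSeries.mul_inv_cancel _ hP, mul_one]
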